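/- Assume each q_i is Lipschitz continuous with Lipschitz constant Q_i, and set Q = max_i Q_i and |α|_∞ = max_i |α_i|. Let f be the bounded fractal function (the unique fixed point of T). Then for every i = 1,…,N, sup_{x, x' ∈ [x_0, x_N)} |f(L_i(x)) − f(L_i(x'))| ≤ |α|_∞ · ω_f(I) + Q · (x_N − x_0), where ω_f(I) = sup_{a, b ∈ I} |f(a) − f(b)| is the oscillation of f on I. -/

import Mathlib

open Set

noncomputable def aC (x : ℕ → ℝ) (N i : ℕ) : ℝ := (x (i + 1) - x i) / (x N - x 0)

noncomputable def bC (x : ℕ → ℝ) (N i : ℕ) : ℝ := (x N * x i - x 0 * x (i + 1)) / (x N - x 0)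

/-- The affine map `L i t = a i * t + b i`. -/
noncomputable def Lm (x : ℕ → ℝ) (N i : ℕ) (t : ℝ) : ℝ := aC x N i * t + bC x N i

/-! Subtracting the self-referential equations at `u` and `v` gives
`f (L_i u) - f (L_i v) = α_i (f u - f v) + (q_i u - q_i v)`; the first term is at most
`|α|_∞ ω_f(I)` and the second at most `Q (x_N - x_0)` by the Lipschitz bound. -/

/-- `ω_f(s)`; as a real `⨆` it is `0`, not `∞`, when `f` is unbounded on `s`. -/
noncomputable def oscillationOn {α : Type*} (f : α → ℝ) (s : Set α) : ℝ :=
  ⨆ u : s, ⨆ v : s, |f u - f v|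

section Oscillation

variable {α : Type*} {f : α → ℝ} {s : Set α}

theorem abs_sub_le_oscillationOn (hf : ∃ M, ∀ t ∈ s, |f t| ≤ M) {u v : α} (hu : u ∈ s)
    (hv : v ∈ s) : |f u - f v| ≤ oscillationOn f s := by
  obtain ⟨M, hM⟩ := hf
  have : Nonempty s := ⟨⟨u, hu⟩⟩
  have bound : ∀ a : s, ∀ b : s, |f a - f b| ≤ 2 * M := fun a b => by
    linarith [abs_sub (f a) (f b), hM a a.2, hM b b.2]
  have hinner : ∀ a : s, BddAbove (range fun b : s => |f a - f b|) := fun a =>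
    ⟨2 * M, forall_mem_range.2 (bound a)⟩
  have houter : BddAbove (range fun a : s => ⨆ b : s, |f a - f b|) :=
    ⟨2 * M, forall_mem_range.2 fun a => ciSup_le fun b => bound a b⟩
  exact (le_ciSup (hinner ⟨u, hu⟩) ⟨v, hv⟩).trans (le_ciSup houter ⟨u, hu⟩)

theorem oscillationOn_le {C : ℝ} (hs : s.Nonempty) (h : ∀ u ∈ s, ∀ v ∈ s, |f u - f v| ≤ C) :
    oscillationOn f s ≤ C :=
  have : Nonempty s := hs.to_subtype
  ciSup_le fun u => ciSup_le fun v => h u u.2 v v.2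

end Oscillation

/-- Oscillation estimate for the bounded fractal function:
`ω_f (L i (I)) ≤ |α|_∞ ω_f (I) + Q (x N - x 0)`. -/
theorem stmt10
    (N : ℕ) (hN : 2 ≤ N)
    (x : ℕ → ℝ)
    (hx : ∀ i, i < N → x i < x (i + 1))
    (α : ℕ → ℝ)
    (q : ℕ → ℝ → ℝ) (Qc : ℕ → ℝ)
    (hQc0 : ∀ i, i < N → 0 ≤ Qc i)
    (hq : ∀ i, i < N → ∀ u ∈ Icc (x 0) (x N), ∀ v ∈ Icc (x 0) (x N),
      |q i u - q i v| ≤ Qc i * |u - v|)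
    (f : ℝ → ℝ)
    (hfb : ∃ M, ∀ t ∈ Icc (x 0) (x N), |f t| ≤ M)
    (hfe : ∀ i, i < N → ∀ t ∈ Ico (x 0) (x N), f (Lm x N i t) = α i * f t + q i t) :
    ∀ i, i < N →
      (⨆ u : Ico (x 0) (x N), ⨆ v : Ico (x 0) (x N),
          |f (Lm x N i (u : ℝ)) - f (Lm x N i (v : ℝ))|) ≤
        (Finset.range N).sup' (Finset.nonempty_range_iff.mpr (by omega)) (fun j => |α j|) *
          (⨆ u : Icc (x 0) (x N), ⨆ v : Icc (x 0) (x N), |f (u : ℝ) - f (v : ℝ)|) +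
        (Finset.range N).sup' (Finset.nonempty_range_iff.mpr (by omega)) Qc * (x N - x 0) := by
  intro i hi
  have hi' : i ∈ Finset.range N := Finset.mem_range.2 hi
  have hxN : x 0 < x N :=
    strictMonoOn_Iic_of_lt_succ hx (mem_Iic.2 (Nat.zero_le N)) (mem_Iic.2 le_rfl) (by omega)
  have hαi := Finset.le_sup' (fun j => |α j|) hi'
  have hQi := Finset.le_sup' Qc hi'
  refine oscillationOn_le (f := f ∘ Lm x N i) (nonempty_Ico.2 hxN) fun u hu v hv => ?_
  have hu' := Ico_subset_Icc_self hu
  have hv' := Ico_subset_Icc_self hv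
  calc |f (Lm x N i u) - f (Lm x N i v)| = |α i * (f u - f v) + (q i u - q i v)| := by
        rw [hfe i hi u hu, hfe i hi v hv]; congr 1; ring
    _ ≤ |α i| * |f u - f v| + Qc i * |u - v| := by
        rw [← abs_mul]
        exact (abs_add_le _ _).trans (by gcongr; exact hq i hi u hu' v hv')
    _ ≤ _ := add_le_add
        (mul_le_mul hαi (abs_sub_le_oscillationOn hfb hu' hv') (abs_nonneg _)
          ((abs_nonneg _).trans hαi))
        (mul_le_mul hQi (Real.dist_le_of_mem_Icc hu' hv') (abs_nonneg _)
          ((hQc0 i hi).trans hQi))
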